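/- arXiv:1504.05671 — 8 statements merged into one kernel-verified Lean document; each statement's English description precedes it below -/
import Mathlib

section
/- Let X and Y be finite simple graphs with p and n vertices respectively. Then the map sending a tuple (σ_1,...,σ_n, τ) with σ_a ∈ Aut(X) and τ ∈ Aut(Y) to the permutation (i,a) ↦ (σ_a(i), τ(a)) of X × Y is an injective group homomorphism from the wreath product Aut(X) ≀ Aut(Y) into Aut(X ∘ Y). -/
/-- The lexicographic product `X ∘ Y`: vertex set `X × Y`, with
`(i,α) ~ (j,β)` iff (`α = β` and `i ~_X j`) or `α ~_Y β`. -/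
def lexProd {α β : Type*} (X : SimpleGraph α) (Y : SimpleGraph β) :
    SimpleGraph (α × β) where
  Adj p q := (p.2 = q.2 ∧ X.Adj p.1 q.1) ∨ Y.Adj p.2 q.2
  symm := by
    constructor
    rintro ⟨i, a⟩ ⟨j, b⟩ (⟨h1, h2⟩ | h)
    · exact Or.inl ⟨h1.symm, h2.symm⟩
    · exact Or.inr h.symm
  loopless := by
    constructor
    rintro ⟨i, a⟩ (⟨-, h⟩ | h)
    · exact X.irrefl h
    · exact Y.irrefl h

/-- A permutation of the vertices is a graph automorphism if it preserves adjacency. -/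
def IsGraphAut {α : Type*} (X : SimpleGraph α) (σ : Equiv.Perm α) : Prop :=
  ∀ i j, X.Adj (σ i) (σ j) ↔ X.Adj i j

/-- The permutation `(i,a) ↦ (σ_a i, τ a)` of `α × β` associated to an element
`((σ_a)_a, τ)` of the wreath product. -/
def wreathMap {α β : Type*} (σ : β → Equiv.Perm α) (τ : Equiv.Perm β) :
    Equiv.Perm (α × β) where
  toFun p := (σ p.2 p.1, τ p.2)
  invFun q := ((σ (τ.symm q.2)).symm q.1, τ.symm q.2)
  left_inv := by rintro ⟨i, a⟩; simp
  right_inv := by rintro ⟨j, b⟩; simp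

@[simp]
theorem wreathMap_apply {α β : Type*} (σ : β → Equiv.Perm α) (τ : Equiv.Perm β)
    (i : α) (a : β) : wreathMap σ τ (i, a) = (σ a i, τ a) :=
  rfl

theorem wreathMap_mul {α β : Type*} (σ σ' : β → Equiv.Perm α) (τ τ' : Equiv.Perm β) :
    wreathMap σ τ * wreathMap σ' τ' = wreathMap (fun a => σ (τ' a) * σ' a) (τ * τ') := by
  ext ⟨i, a⟩ <;> rfl

theorem wreathMap_inj {α β : Type*} [Nonempty α] {σ σ' : β → Equiv.Perm α}
    {τ τ' : Equiv.Perm β} : wreathMap σ τ = wreathMap σ' τ' ↔ σ = σ' ∧ τ = τ' := by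
  refine ⟨fun h => ?_, fun ⟨hσ, hτ⟩ => hσ ▸ hτ ▸ rfl⟩
  have hpoint (i : α) (a : β) : σ a i = σ' a i ∧ τ a = τ' a := by
    simpa using congr($h (i, a))
  refine ⟨funext fun a => Equiv.ext fun i => (hpoint i a).1, Equiv.ext fun a => ?_⟩
  exact (hpoint (Classical.arbitrary α) a).2

theorem IsGraphAut.lexProd_wreathMap {α β : Type*} {X : SimpleGraph α} {Y : SimpleGraph β}
    {σ : β → Equiv.Perm α} {τ : Equiv.Perm β} (hσ : ∀ a, IsGraphAut X (σ a))
    (hτ : IsGraphAut Y τ) : IsGraphAut (lexProd X Y) (wreathMap σ τ) := by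
  rintro ⟨i, a⟩ ⟨j, b⟩
  simp only [lexProd, wreathMap_apply, τ.apply_eq_iff_eq, hτ a b]
  exact or_congr_left (and_congr_right fun hab => by subst hab; exact hσ a i j)

theorem wreath_embeds_in_aut_lexProd_general {α β : Type*}
    [Nonempty α] (X : SimpleGraph α) (Y : SimpleGraph β) :
    (∀ (σ : β → Equiv.Perm α) (τ : Equiv.Perm β),
        (∀ a, IsGraphAut X (σ a)) → IsGraphAut Y τ →
          IsGraphAut (lexProd X Y) (wreathMap σ τ)) ∧
    (∀ (σ σ' : β → Equiv.Perm α) (τ τ' : Equiv.Perm β),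
        (∀ a, IsGraphAut X (σ a)) → IsGraphAut Y τ →
        (∀ a, IsGraphAut X (σ' a)) → IsGraphAut Y τ' →
          wreathMap σ τ * wreathMap σ' τ' =
            wreathMap (fun a => σ (τ' a) * σ' a) (τ * τ')) ∧
    (∀ (σ σ' : β → Equiv.Perm α) (τ τ' : Equiv.Perm β),
        (∀ a, IsGraphAut X (σ a)) → IsGraphAut Y τ →
        (∀ a, IsGraphAut X (σ' a)) → IsGraphAut Y τ' →
          wreathMap σ τ = wreathMap σ' τ' → σ = σ' ∧ τ = τ') :=
  ⟨fun _ _ hσ hτ => IsGraphAut.lexProd_wreathMap hσ hτ,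
    fun σ σ' τ τ' _ _ _ _ => wreathMap_mul σ σ' τ τ',
    fun _ _ _ _ _ _ _ _ => wreathMap_inj.mp⟩

/-- The map sending `((σ_a)_a, τ)` with each `σ_a ∈ Aut(X)` and
`τ ∈ Aut(Y)` to the permutation `(i,a) ↦ (σ_a i, τ a)` of `X × Y` is an injective
group homomorphism from the wreath product `Aut(X) ≀ Aut(Y)`
(with multiplication `((σ_a)_a, τ)·((σ'_a)_a, τ') = ((σ_{τ' a} σ'_a)_a, τ τ')`)
into `Aut(X ∘ Y)`. -/
theorem wreath_embeds_in_aut_lexProd {α β : Type*} [Fintype α] [Fintype β]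
    [Nonempty α] [Nonempty β] (X : SimpleGraph α) (Y : SimpleGraph β) :
    (∀ (σ : β → Equiv.Perm α) (τ : Equiv.Perm β),
        (∀ a, IsGraphAut X (σ a)) → IsGraphAut Y τ →
          IsGraphAut (lexProd X Y) (wreathMap σ τ)) ∧
    (∀ (σ σ' : β → Equiv.Perm α) (τ τ' : Equiv.Perm β),
        (∀ a, IsGraphAut X (σ a)) → IsGraphAut Y τ →
        (∀ a, IsGraphAut X (σ' a)) → IsGraphAut Y τ' →
          wreathMap σ τ * wreathMap σ' τ' =
            wreathMap (fun a => σ (τ' a) * σ' a) (τ * τ')) ∧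
    (∀ (σ σ' : β → Equiv.Perm α) (τ τ' : Equiv.Perm β),
        (∀ a, IsGraphAut X (σ a)) → IsGraphAut Y τ →
        (∀ a, IsGraphAut X (σ' a)) → IsGraphAut Y τ' →
          wreathMap σ τ = wreathMap σ' τ' → σ = σ' ∧ τ = τ') :=
  wreath_embeds_in_aut_lexProd_general X Y
end

section
/- Let X and Y be finite simple graphs with X ∘ Y their lexicographic product. If X is disconnected and there exist distinct vertices y_0 ≠ y_1 of Y with the same open neighborhood (i.e. S_Y ≠ ∅), then the natural embedding of Aut(X) ≀ Aut(Y) into Aut(X ∘ Y) is not surjective. -/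
/-!
A permutation of `Y` that fixes every open neighbourhood (such as the transposition of two
vertices with equal neighbourhoods) may be applied to the copies of `Y` over one connected
component of `X` and not over the others; this is an automorphism of `X ∘ Y`. Every element of
`Aut(X) ≀ Aut(Y)` moves the `Y`-coordinate in the same way on all copies, so if `X` has a second
component, this automorphism is not in the image.
-/

open SimpleGraph

lemma neighborSet_swap_apply {β : Type*} [DecidableEq β] {Y : SimpleGraph β} {y₀ y₁ : β}
    (h : Y.neighborSet y₀ = Y.neighborSet y₁) (a : β) :
    Y.neighborSet (Equiv.swap y₀ y₁ a) = Y.neighborSet a := by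
  rw [Equiv.swap_apply_def]
  split_ifs with h₀ h₁
  · rw [h₀, h]
  · rw [h₁, h]
  · rfl

lemma isGraphAut_prodShear_connectedComponentMk {α β : Type*} {X : SimpleGraph α}
    {Y : SimpleGraph β} (t : X.ConnectedComponent → Equiv.Perm β)
    (ht : ∀ c a, Y.neighborSet (t c a) = Y.neighborSet a) :
    IsGraphAut (lexProd X Y)
      (Equiv.prodShear (Equiv.refl α) fun i => t (X.connectedComponentMk i)) := by
  have hadj : ∀ c d a b, Y.Adj (t c a) (t d b) ↔ Y.Adj a b := fun c d a b => by
    rw [← mem_neighborSet, ht, mem_neighborSet, Y.adj_comm, ← mem_neighborSet, ht,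
      mem_neighborSet, Y.adj_comm]
  rintro ⟨i, a⟩ ⟨j, b⟩
  change (t _ a = t _ b ∧ X.Adj i j) ∨ Y.Adj (t _ a) (t _ b) ↔ (a = b ∧ X.Adj i j) ∨ Y.Adj a b
  rw [hadj]
  refine or_congr_left ⟨fun ⟨hab, hij⟩ => ⟨?_, hij⟩, fun ⟨hab, hij⟩ => ⟨?_, hij⟩⟩
  · rwa [ConnectedComponent.connectedComponentMk_eq_of_adj hij, (t _).apply_eq_iff_eq] at hab
  · rw [hab, ConnectedComponent.connectedComponentMk_eq_of_adj hij]

lemma wreathMap_ne_of_snd_ne {α β : Type*} {σ : β → Equiv.Perm α} {τ : Equiv.Perm β}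
    {f : Equiv.Perm (α × β)} {u v : α} {y : β} (h : (f (u, y)).2 ≠ (f (v, y)).2) :
    wreathMap σ τ ≠ f := by
  rintro rfl
  exact h rfl

lemma exists_not_reachable_of_not_connected {α : Type*} [Nonempty α] {X : SimpleGraph α}
    (h : ¬ X.Connected) : ∃ u v, ¬ X.Reachable u v := by
  obtain ⟨u⟩ := ‹Nonempty α›
  simp only [connected_iff_exists_forall_reachable, not_exists, not_forall] at h
  exact ⟨u, h u⟩

theorem wreath_embedding_not_surjective_general {α β : Type*} [Fintype α]
    (X : SimpleGraph α) (Y : SimpleGraph β)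
    (hcard : 2 ≤ Fintype.card α) (hconn : ¬ X.Connected)
    (hS : ∃ y₀ y₁ : β, y₀ ≠ y₁ ∧ Y.neighborSet y₀ = Y.neighborSet y₁) :
    ∃ f : Equiv.Perm (α × β), IsGraphAut (lexProd X Y) f ∧
      ∀ (σ : β → Equiv.Perm α) (τ : Equiv.Perm β),
        (∀ a, IsGraphAut X (σ a)) → IsGraphAut Y τ → wreathMap σ τ ≠ f := by
  classical
  obtain ⟨y₀, y₁, hne, hN⟩ := hS
  have : Nonempty α := Fintype.card_pos_iff.mp (by omega)
  obtain ⟨u, v, huv⟩ := exists_not_reachable_of_not_connected hconn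
  let t : X.ConnectedComponent → Equiv.Perm β := fun c =>
    if c = X.connectedComponentMk u then Equiv.swap y₀ y₁ else 1
  have ht : ∀ c a, Y.neighborSet (t c a) = Y.neighborSet a := fun c a => by
    by_cases hc : c = X.connectedComponentMk u
    · simp only [t, if_pos hc, neighborSet_swap_apply hN]
    · simp only [t, if_neg hc, Equiv.Perm.one_apply]
  refine ⟨_, isGraphAut_prodShear_connectedComponentMk t ht, fun σ τ _ _ => ?_⟩
  refine wreathMap_ne_of_snd_ne (u := u) (v := v) (y := y₀) ?_
  have hvu : ¬ X.Reachable v u := fun h => huv h.symm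
  simpa [t, hvu] using hne.symm

/-- If `X` is disconnected with at least 2 vertices and `Y` has two
distinct vertices with the same open neighborhood (`S_Y ≠ ∅`), then the natural
embedding of `Aut(X) ≀ Aut(Y)` into `Aut(X ∘ Y)` is not surjective. -/
theorem wreath_embedding_not_surjective {α β : Type*} [Fintype α] [Fintype β]
    (X : SimpleGraph α) (Y : SimpleGraph β)
    (hcard : 2 ≤ Fintype.card α) (hconn : ¬ X.Connected)
    (hS : ∃ y₀ y₁ : β, y₀ ≠ y₁ ∧ Y.neighborSet y₀ = Y.neighborSet y₁) :
    ∃ f : Equiv.Perm (α × β), IsGraphAut (lexProd X Y) f ∧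
      ∀ (σ : β → Equiv.Perm α) (τ : Equiv.Perm β),
        (∀ a, IsGraphAut X (σ a)) → IsGraphAut Y τ → wreathMap σ τ ≠ f :=
  wreath_embedding_not_surjective_general X Y hcard hconn hS
end

section
/- Let Y be a regular finite simple graph and L, J distinct vertices of Y with L ~ J. If no vertex Q of Y satisfies both Q ∈ W(L) (i.e. Q ≠ L and Q ≁ L) and Q ~ J, then N(L) ∪ {L} = N(J) ∪ {J}, i.e. (L,J) ∈ T_Y. -/
/-- Let `Y` be a regular finite simple graph and `L ≠ J` vertices
with `L ~ J`. If no vertex `Q` satisfies `Q ∈ W(L)` (i.e. `Q ≠ L` and `Q ≁ L`) and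
`Q ~ J`, then `N(L) ∪ {L} = N(J) ∪ {J}`, i.e. `(L,J) ∈ T_Y`. -/
theorem closed_neighborhoods_eq_of_no_witness {β : Type*} [Fintype β]
    (Y : SimpleGraph β) [DecidableRel Y.Adj] (d : ℕ) (hreg : Y.IsRegularOfDegree d)
    (L J : β) (hne : L ≠ J) (hadj : Y.Adj L J)
    (hW : ∀ Q, ¬ ((Q ≠ L ∧ ¬ Y.Adj Q L) ∧ Y.Adj Q J)) :
    Y.neighborSet L ∪ {L} = Y.neighborSet J ∪ {J} := by
  have hsub : Y.neighborSet J ∪ {J} ⊆ Y.neighborSet L ∪ {L} := by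
    rintro Q (hQ | hQ)
    · by_cases hQL : Q = L
      · exact Or.inr hQL
      · have := hW Q
        push_neg at this
        exact Or.inl (by
          by_contra hAdjL
          exact this ⟨hQL, fun h => hAdjL h.symm⟩ hQ.symm)
    · exact Or.inl (by simp at hQ; simpa [hQ] using hadj)
  have hncard : ∀ v : β, (Y.neighborSet v ∪ {v}).ncard = d + 1 := by
    intro v
    rw [Set.union_singleton, Set.ncard_insert_of_notMem (by simp),
      Set.ncard_eq_toFinset_card', ← SimpleGraph.neighborFinset_def]
    exact congrArg (· + 1) (hreg v)
  exact ((Set.eq_of_subset_of_ncard_le hsub (by rw [hncard, hncard])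
    (Set.toFinite _)).symm)
end

section
/- Let X be a finite simple graph on vertex set [1,n] with adjacency matrix d_X, A a unital C*-algebra, and u ∈ M_n(A) a magic unitary (entries are projections, rows and columns sum to 1). Then d_X u = u d_X (as matrices over A) if and only if for all i,j,k,l with i ~ j and d_{kl} = 0 one has u_{ik} u_{jl} = 0 and u_{ki} u_{lj} = 0. -/
/-- In a unital C*-algebra, a finite sum of elements of the form `star (g m) * g m`
vanishing forces each summand to vanish. -/
lemma MagicAux.sum_star_mul_self_eq_zero {A ι : Type*} [CStarAlgebra A]
    (s : Finset ι) (g : ι → A) (h : ∑ m ∈ s, star (g m) * g m = 0) :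
    ∀ m ∈ s, g m = 0 := by
  let _ := CStarAlgebra.spectralOrder A
  have _ := CStarAlgebra.spectralOrderedRing A
  intro m hm
  have h0 : ∀ m ∈ s, (0 : A) ≤ star (g m) * g m := fun m _ => star_mul_self_nonneg _
  have := (Finset.sum_eq_zero_iff_of_nonneg h0).mp h m hm
  exact (CStarRing.star_mul_self_eq_zero_iff _).mp this

/-- If a sum of projections annihilates `q` on the left then each projection does. -/
lemma MagicAux.proj_sum_cancel {A ι : Type*} [CStarAlgebra A]
    (s : Finset ι) (f : ι → A)
    (hf : ∀ m ∈ s, IsIdempotentElem (f m) ∧ star (f m) = f m)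
    (q : A) (h : (∑ m ∈ s, f m) * q = 0) :
    ∀ m ∈ s, f m * q = 0 := by
  apply MagicAux.sum_star_mul_self_eq_zero s (fun m => f m * q)
  have : ∀ m ∈ s, star (f m * q) * (f m * q) = star q * (f m * q) := by
    intro m hm
    rw [star_mul, (hf m hm).2, mul_assoc, ← mul_assoc (f m), (hf m hm).1]
  rw [Finset.sum_congr rfl this, ← Finset.mul_sum, ← Finset.sum_mul, h, mul_zero]

/-- If `q` annihilates a sum of projections on the left then it annihilates each. -/
lemma MagicAux.cancel_proj_sum {A ι : Type*} [CStarAlgebra A]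
    (s : Finset ι) (f : ι → A)
    (hf : ∀ m ∈ s, IsIdempotentElem (f m) ∧ star (f m) = f m)
    (q : A) (h : q * (∑ m ∈ s, f m) = 0) :
    ∀ m ∈ s, q * f m = 0 := by
  intro m hm
  have h' : (∑ m ∈ s, f m) * star q = 0 := by
    have := congrArg star h
    rw [star_mul, star_zero, star_sum] at this
    rwa [Finset.sum_congr rfl (fun m hm => (hf m hm).2)] at this
  have := MagicAux.proj_sum_cancel s f hf (star q) h' m hm
  have := congrArg star this
  rwa [star_mul, star_star, (hf m hm).2, star_zero] at this

/-- A magic unitary over a unital C*-algebra: a square matrix all of whose entries are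
projections, with each row and each column summing to `1`. -/
def IsMagicUnitary {ι A : Type*} [Fintype ι] [Ring A] [StarRing A]
    (u : Matrix ι ι A) : Prop :=
  (∀ i j, IsIdempotentElem (u i j) ∧ star (u i j) = u i j) ∧
    (∀ i, ∑ j, u i j = 1) ∧ (∀ j, ∑ i, u i j = 1)

section MagicAux
variable {ι A : Type*} [Fintype ι] [DecidableEq ι] [CStarAlgebra A]
  {u : Matrix ι ι A}

/-- Row orthogonality of a magic unitary. -/
lemma MagicAux.row_orth (hu : IsMagicUnitary u) (i : ι) {k m : ι} (hkm : k ≠ m) : u i k * u i m = 0 := by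
  have hrow := hu.2.1 i
  have hsplit : u i k + ∑ j ∈ Finset.univ.erase k, u i j = 1 := by
    rw [Finset.add_sum_erase _ _ (Finset.mem_univ k)]; exact hrow
  have h : u i k * (∑ j ∈ Finset.univ.erase k, u i j) = 0 := by
    have : (∑ j ∈ Finset.univ.erase k, u i j) = 1 - u i k := by
      rw [eq_sub_iff_add_eq, add_comm]; exact hsplit
    rw [this, mul_sub, mul_one, (hu.1 i k).1, sub_self]
  exact MagicAux.cancel_proj_sum _ _ (fun m _ => hu.1 i m) _ h m
    (Finset.mem_erase.mpr ⟨hkm.symm, Finset.mem_univ m⟩)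

/-- Column orthogonality of a magic unitary. -/
lemma MagicAux.col_orth (hu : IsMagicUnitary u) (j : ι) {k m : ι} (hkm : k ≠ m) : u k j * u m j = 0 := by
  have hcol := hu.2.2 j
  have h : u k j * (∑ i ∈ Finset.univ.erase k, u i j) = 0 := by
    have : (∑ i ∈ Finset.univ.erase k, u i j) = 1 - u k j := by
      rw [eq_sub_iff_add_eq, add_comm]
      exact (Finset.add_sum_erase _ (fun i => u i j) (Finset.mem_univ k)).trans hcol
    rw [this, mul_sub, mul_one, (hu.1 k j).1, sub_self]
  exact MagicAux.cancel_proj_sum _ _ (fun m _ => hu.1 m j) _ h m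
    (Finset.mem_erase.mpr ⟨hkm.symm, Finset.mem_univ m⟩)

end MagicAux

/-- For a finite simple graph `X` on `n` vertices with adjacency matrix
`d_X` and a magic unitary `u ∈ M_n(A)` over a unital C*-algebra `A`, one has
`d_X u = u d_X` if and only if for all `i,j,k,l` with `i ~ j` and `k ≁ l`,
`u_{ik} u_{jl} = 0` and `u_{ki} u_{lj} = 0`. -/
theorem adjMatrix_commute_iff_orthogonality {n : ℕ} {A : Type*} [CStarAlgebra A]
    (X : SimpleGraph (Fin n)) [DecidableRel X.Adj]
    (u : Matrix (Fin n) (Fin n) A) (hu : IsMagicUnitary u) :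
    X.adjMatrix A * u = u * X.adjMatrix A ↔
      ∀ i j k l, X.Adj i j → ¬ X.Adj k l →
        u i k * u j l = 0 ∧ u k i * u l j = 0 := by
  constructor
  · intro hcomm i j k l hij hkl
    have hptwise : ∀ a b, ∑ m ∈ X.neighborFinset a, u m b = ∑ m ∈ X.neighborFinset b, u a m := by
      intro a b
      have h := Matrix.ext_iff.mpr hcomm a b
      rwa [SimpleGraph.adjMatrix_mul_apply, SimpleGraph.mul_adjMatrix_apply] at h
    constructor
    · -- u i k * u j l = 0
      have h1 : u i k * (∑ m ∈ X.neighborFinset l, u i m) = 0 := by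
        rw [Finset.mul_sum]
        apply Finset.sum_eq_zero
        intro m hm
        apply MagicAux.row_orth hu i
        rintro rfl
        exact hkl ((X.mem_neighborFinset l k).mp hm).symm
      have h2 : u i k * (∑ m ∈ X.neighborFinset i, u m l) = 0 := by
        rw [hptwise i l]; exact h1
      exact MagicAux.cancel_proj_sum _ _ (fun m _ => hu.1 m l) _ h2 j
        ((X.mem_neighborFinset i j).mpr hij)
    · -- u k i * u l j = 0
      have h1 : u l j * (∑ m ∈ X.neighborFinset k, u m j) = 0 := by
        rw [Finset.mul_sum]
        apply Finset.sum_eq_zero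
        intro m hm
        apply MagicAux.col_orth hu j
        rintro rfl
        exact hkl ((X.mem_neighborFinset k l).mp hm)
      have h2 : u l j * (∑ m ∈ X.neighborFinset j, u k m) = 0 := by
        rw [← hptwise k j]; exact h1
      have := MagicAux.cancel_proj_sum _ _ (fun m _ => hu.1 k m) _ h2 i
        ((X.mem_neighborFinset j i).mpr hij.symm)
      -- this : u l j * u k i = 0 ; take star
      have hs := congrArg star this
      rwa [star_mul, (hu.1 l j).2, (hu.1 k i).2, star_zero] at hs
  · intro hrel
    ext i k
    rw [SimpleGraph.adjMatrix_mul_apply, SimpleGraph.mul_adjMatrix_apply]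
    -- LHS : ∑ j ∈ N(i), u j k ; RHS : ∑ l ∈ N(k), u i l
    have lhs_eq : ∑ j ∈ X.neighborFinset i, u j k
        = ∑ l ∈ X.neighborFinset k, ∑ j ∈ X.neighborFinset i, u i l * u j k := by
      calc ∑ j ∈ X.neighborFinset i, u j k
          = (∑ l, u i l) * ∑ j ∈ X.neighborFinset i, u j k := by rw [hu.2.1 i, one_mul]
        _ = ∑ l, ∑ j ∈ X.neighborFinset i, u i l * u j k := by
            rw [Finset.sum_mul]; exact Finset.sum_congr rfl fun l _ => Finset.mul_sum _ _ _
        _ = ∑ l ∈ X.neighborFinset k, ∑ j ∈ X.neighborFinset i, u i l * u j k := by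
            rw [← Finset.sum_subset (Finset.subset_univ (X.neighborFinset k))]
            intro l _ hl
            apply Finset.sum_eq_zero
            intro j hj
            exact (hrel i j l k ((X.mem_neighborFinset i j).mp hj)
              (fun h => hl ((X.mem_neighborFinset k l).mpr h.symm))).1
    have rhs_eq : ∑ l ∈ X.neighborFinset k, u i l
        = ∑ l ∈ X.neighborFinset k, ∑ j ∈ X.neighborFinset i, u i l * u j k := by
      apply Finset.sum_congr rfl
      intro l hl
      calc u i l = u i l * ∑ j, u j k := by rw [hu.2.2 k, mul_one]
        _ = ∑ j, u i l * u j k := Finset.mul_sum _ _ _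
        _ = ∑ j ∈ X.neighborFinset i, u i l * u j k := by
            rw [← Finset.sum_subset (Finset.subset_univ (X.neighborFinset i))]
            intro j _ hj
            exact (hrel l k i j ((X.mem_neighborFinset k l).mp hl).symm
              (fun h => hj ((X.mem_neighborFinset i j).mpr h))).2
    rw [lhs_eq, rhs_eq]
end

section
/- Let Z = (Z_{ia,jb}) be a magic unitary of size np over a unital C*-algebra, indexed by [1,p]×[1,n], and suppose that for all L, J ∈ [1,n] the element P_L^J := Σ_{s=1}^p Z_{sL,kJ} is independent of k ∈ [1,p]. Then the n×n matrix P = (P_L^J) is itself a magic unitary: its entries are projections, distinct entries in a row or column are orthogonal, and rows and columns sum to 1. -/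
/-!
The entries of a column of a magic unitary are projections summing to `1`, hence mutually
orthogonal, so each `P_L^J`, a partial sum of the column `(k₀, J)` of `Z`, is a projection.
The columns of `P` sum to full columns of `Z`. For the rows, the independence of `k` lets one
replace `p • ∑_J P_L^J` by `∑_k ∑_J ∑_s Z_{sL,kJ}`, which is the sum of the `p` rows `(s, L)`
of `Z`, i.e. `p • 1`. Orthogonality within rows and columns of `P` then follows again from
the columns and rows summing to `1`.
-/

open Finset

theorem OrthogonalIdempotents.isStarProjection_sum {ι A : Type*} [Ring A] [StarRing A]
    {e : ι → A} (he : OrthogonalIdempotents e) (hsa : ∀ i, IsSelfAdjoint (e i)) (s : Finset ι) :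
    IsStarProjection (∑ i ∈ s, e i) :=
  ⟨he.isIdempotentElem_sum, isSelfAdjoint_sum s fun i _ ↦ hsa i⟩

/-- In a C⋆-algebra, star projections summing to `1` are mutually orthogonal: `e j ≤ 1 - e i`
for `j ≠ i` in the spectral order, and for projections `p ≤ q` means `q * p = p`. -/
theorem CompleteOrthogonalIdempotents.of_isStarProjection {ι A : Type*} [Fintype ι]
    [CStarAlgebra A] {e : ι → A} (he : ∀ i, IsStarProjection (e i)) (hsum : ∑ i, e i = 1) :
    CompleteOrthogonalIdempotents e := by
  classical
  let _ : PartialOrder A := CStarAlgebra.spectralOrder A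
  have : StarOrderedRing A := CStarAlgebra.spectralOrderedRing A
  refine (CompleteOrthogonalIdempotents.iff_ortho_complete).2 ⟨fun i j hij ↦ ?_, hsum⟩
  have hle : e j ≤ 1 - e i := by
    rw [← hsum, ← sum_erase_eq_sub (mem_univ i)]
    exact single_le_sum (fun k _ ↦ (he k).nonneg) (mem_erase.2 ⟨hij.symm, mem_univ j⟩)
  have hmul : (1 - e i) * e j = e j := ((he j).le_iff_mul_eq_right (he i).one_sub).1 hle
  rwa [sub_mul, one_mul, sub_eq_self] at hmul

/-- Summing the `card κ` equal quantities `∑ J, ∑ s, Z (s, L) (k, J)` over `k` regroups them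
into the `card κ` row sums of the rows `(s, L)`. -/
theorem Matrix.sum_sum_block_eq_of_row_sum_eq {κ ι M : Type*} [Fintype κ] [Fintype ι]
    [AddCommMonoid M] [IsAddTorsionFree M] (Z : Matrix (κ × ι) (κ × ι) M) {c : M}
    (hrow : ∀ r, ∑ q, Z r q = c)
    (hindep : ∀ (L J : ι) (k₁ k₂ : κ), ∑ s, Z (s, L) (k₁, J) = ∑ s, Z (s, L) (k₂, J))
    (L : ι) (k₀ : κ) :
    ∑ J, ∑ s, Z (s, L) (k₀, J) = c := by
  have hcard : Fintype.card κ ≠ 0 := (Fintype.card_pos_iff.2 ⟨k₀⟩).ne'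
  refine nsmul_right_injective hcard ?_
  calc Fintype.card κ • ∑ J, ∑ s, Z (s, L) (k₀, J)
      = ∑ k : κ, ∑ J, ∑ s, Z (s, L) (k, J) := by
        rw [← Finset.card_univ, ← sum_const]
        exact sum_congr rfl fun k _ ↦ sum_congr rfl fun J _ ↦ hindep L J k₀ k
    _ = ∑ s, ∑ k, ∑ J, Z (s, L) (k, J) := (sum_congr rfl fun _ _ ↦ sum_comm).trans sum_comm
    _ = ∑ s, ∑ q, Z (s, L) q := by simp only [Fintype.sum_prod_type]
    _ = Fintype.card κ • c := by simp [hrow]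

namespace IsMagicUnitary

section Ring

variable {ι A : Type*} [Fintype ι] [Ring A] [StarRing A] {u : Matrix ι ι A}

theorem isStarProjection (hu : IsMagicUnitary u) (i j : ι) : IsStarProjection (u i j) :=
  ⟨(hu.1 i j).1, (hu.1 i j).2⟩

theorem of_isStarProjection (hproj : ∀ i j, IsStarProjection (u i j))
    (hrow : ∀ i, ∑ j, u i j = 1) (hcol : ∀ j, ∑ i, u i j = 1) : IsMagicUnitary u :=
  ⟨fun i j ↦ ⟨(hproj i j).isIdempotentElem, (hproj i j).isSelfAdjoint⟩, hrow, hcol⟩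

end Ring

section CStarAlgebra

variable {ι A : Type*} [Fintype ι] [CStarAlgebra A] {u : Matrix ι ι A}

theorem row_completeOrthogonalIdempotents (hu : IsMagicUnitary u) (i : ι) :
    CompleteOrthogonalIdempotents (u i) :=
  .of_isStarProjection (hu.isStarProjection i) (hu.2.1 i)

theorem col_completeOrthogonalIdempotents (hu : IsMagicUnitary u) (j : ι) :
    CompleteOrthogonalIdempotents (u · j) :=
  .of_isStarProjection (hu.isStarProjection · j) (hu.2.2 j)

theorem isStarProjection_sum_col_comp (hu : IsMagicUnitary u) (j : ι) {κ : Type*} [Fintype κ]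
    (f : κ ↪ ι) : IsStarProjection (∑ k, u (f k) j) :=
  ((hu.col_completeOrthogonalIdempotents j).embedding f).isStarProjection_sum
    (fun k ↦ (hu.isStarProjection (f k) j).isSelfAdjoint) univ

end CStarAlgebra

end IsMagicUnitary

/-- Let `Z` be a magic unitary of size `np` indexed by `[1,p]×[1,n]`,
such that `P_L^J := Σ_s Z_{sL,kJ}` is independent of `k`. Then the `n×n` matrix
`P = (P_L^J)` is itself a magic unitary: entries are projections, distinct entries in a
row or column are orthogonal, and rows and columns sum to `1`. -/
theorem P_matrix_is_magic_unitary {p n : ℕ} {A : Type*} [CStarAlgebra A]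
    (Z : Matrix (Fin p × Fin n) (Fin p × Fin n) A) (hZ : IsMagicUnitary Z)
    (hindep : ∀ (L J : Fin n) (k₁ k₂ : Fin p),
      ∑ s, Z (s, L) (k₁, J) = ∑ s, Z (s, L) (k₂, J))
    (k₀ : Fin p) :
    IsMagicUnitary (Matrix.of fun L J : Fin n => ∑ s, Z (s, L) (k₀, J)) ∧
    (∀ L J J' : Fin n, J ≠ J' →
      (∑ s, Z (s, L) (k₀, J)) * (∑ s, Z (s, L) (k₀, J')) = 0) ∧
    (∀ L L' J : Fin n, L ≠ L' →
      (∑ s, Z (s, L) (k₀, J)) * (∑ s, Z (s, L') (k₀, J)) = 0) := by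
  have : IsAddTorsionFree A := .of_isTorsionFree ℂ A
  have hP : IsMagicUnitary (Matrix.of fun L J : Fin n => ∑ s, Z (s, L) (k₀, J)) :=
    .of_isStarProjection
      (fun L J ↦ hZ.isStarProjection_sum_col_comp (k₀, J) ⟨(·, L), Prod.mk_left_injective L⟩)
      (fun L ↦ Z.sum_sum_block_eq_of_row_sum_eq hZ.2.1 hindep L k₀)
      (fun J ↦ (Fintype.sum_prod_type_right _).symm.trans (hZ.2.2 (k₀, J)))
  exact ⟨hP, fun L _ _ hJ ↦ (hP.row_completeOrthogonalIdempotents L).ortho hJ,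
    fun _ _ J hL ↦ (hP.col_completeOrthogonalIdempotents J).ortho hL⟩
end

section
/- Let Z be a magic unitary of size np over a unital C*-algebra indexed by [1,p]×[1,n] such that P_L^J := Σ_{s=1}^p Z_{sL,kJ} is independent of k. Then for all L ≠ L' in [1,n], all J ∈ [1,n] and all i, i', j, j' ∈ [1,p]: Z_{iL,jJ} Z_{i'L',j'J} = 0. -/
lemma ortho_of_sum {A : Type*} [CStarAlgebra A] (p q : A) (hp : IsIdempotentElem p)
    (hps : star p = p) (hq : IsIdempotentElem q) (hqs : star q = q) (r : A)
    (hr : letI := CStarAlgebra.spectralOrder A; 0 ≤ r)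
    (h : p + q + r = 1) : p * q = 0 := by
  letI := CStarAlgebra.spectralOrder A
  haveI := CStarAlgebra.spectralOrderedRing A
  have hsqr : star (p * q) * (p * q) = q * (p * p) * q := by
    rw [star_mul, hps, hqs]; noncomm_ring
  rw [hp.eq] at hsqr
  have hqqq : q * q * q = q := by rw [hq.eq, hq.eq]
  have key : q * p * q + q + q * r * q = q := by
    have := congrArg (fun x => q * x * q) h
    simp only [mul_add, add_mul, mul_one] at this
    rwa [hqqq, hq.eq] at this
  have h2 : q * r * q + q * p * q = 0 := by
    calc q * r * q + q * p * q = (q * p * q + q + q * r * q) - q := by abel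
      _ = 0 := by rw [key]; abel
  have h1 : 0 ≤ q * r * q := by have := star_left_conjugate_nonneg hr q; rwa [hqs] at this
  have h3 : 0 ≤ q * p * q := hsqr ▸ star_mul_self_nonneg (p * q)
  have h4 : q * p * q = 0 := by
    have hneg : q * r * q = -(q * p * q) := eq_neg_of_add_eq_zero_left h2
    exact le_antisymm (by rw [← neg_nonneg, ← hneg]; exact h1) h3
  exact CStarRing.star_mul_self_eq_zero_iff _ |>.mp (hsqr.trans h4)

/-- Entries of a magic unitary in the same column are pairwise orthogonal. -/
lemma magic_col_orth {ι A : Type*} [Fintype ι] [DecidableEq ι] [CStarAlgebra A]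
    {u : Matrix ι ι A} (hu : IsMagicUnitary u) {a b : ι} (hab : a ≠ b) (c : ι) :
    u a c * u b c = 0 := by
  letI := CStarAlgebra.spectralOrder A
  haveI := CStarAlgebra.spectralOrderedRing A
  obtain ⟨hproj, _, hcol⟩ := hu
  refine ortho_of_sum _ _ (hproj a c).1 (hproj a c).2 (hproj b c).1 (hproj b c).2
    (∑ i ∈ (Finset.univ.erase a).erase b, u i c) ?_ ?_
  · refine Finset.sum_nonneg fun i _ => ?_
    have := star_mul_self_nonneg (u i c)
    rwa [(hproj i c).2, (hproj i c).1.eq] at this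
  · have hb : b ∈ Finset.univ.erase a := Finset.mem_erase.mpr ⟨hab.symm, Finset.mem_univ b⟩
    rw [add_assoc, Finset.add_sum_erase _ (fun i => u i c) hb, Finset.add_sum_erase _ (fun i => u i c) (Finset.mem_univ a)]
    exact hcol c

/-- Let `Z` be a magic unitary of size `np` indexed by `[1,p]×[1,n]`
such that `P_L^J := Σ_s Z_{sL,kJ}` is independent of `k`. Then for all `L ≠ L'`, all
`J` and all `i, i', j, j'`: `Z_{iL,jJ} Z_{i'L',j'J} = 0`. -/
theorem Z_orthogonality_different_rows {p n : ℕ} {A : Type*} [CStarAlgebra A]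
    (Z : Matrix (Fin p × Fin n) (Fin p × Fin n) A) (hZ : IsMagicUnitary Z)
    (hindep : ∀ (L J : Fin n) (k₁ k₂ : Fin p),
      ∑ s, Z (s, L) (k₁, J) = ∑ s, Z (s, L) (k₂, J))
    (L L' J : Fin n) (hLL' : L ≠ L') (i i' j j' : Fin p) :
    Z (i, L) (j, J) * Z (i', L') (j', J) = 0 := by
  have col := fun {a b : Fin p × Fin n} (hab : a ≠ b) (c : Fin p × Fin n) =>
    magic_col_orth hZ hab c
  set P : A := ∑ s, Z (s, L) (j, J) with hP
  set P' : A := ∑ s, Z (s, L') (j', J) with hP'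
  have hZP : Z (i, L) (j, J) * P = Z (i, L) (j, J) := by
    rw [hP, Finset.mul_sum]
    rw [Finset.sum_eq_single i (fun s _ hs => col (by simp [hs.symm]) _)
      (fun h => absurd (Finset.mem_univ i) h)]
    exact (hZ.1 _ _).1.eq
  have hPZ : P' * Z (i', L') (j', J) = Z (i', L') (j', J) := by
    rw [hP', Finset.sum_mul]
    rw [Finset.sum_eq_single i' (fun s _ hs => col (by simp [hs]) _)
      (fun h => absurd (Finset.mem_univ i') h)]
    exact (hZ.1 _ _).1.eq
  have hPP' : P * P' = 0 := by
    rw [hP', hindep L' J j' j, hP, Finset.sum_mul]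
    refine Finset.sum_eq_zero fun s _ => ?_
    rw [Finset.mul_sum]
    exact Finset.sum_eq_zero fun t _ => col (by simp [hLL']) _
  calc Z (i, L) (j, J) * Z (i', L') (j', J)
      = (Z (i, L) (j, J) * P) * (P' * Z (i', L') (j', J)) := by rw [hZP, hPZ]
    _ = Z (i, L) (j, J) * (P * P') * Z (i', L') (j', J) := by noncomm_ring
    _ = 0 := by rw [hPP']; simp
end

section
/- Let Z be a magic unitary of size np over a unital C*-algebra indexed by [1,p]×[1,n] such that P_a^b := Σ_{s=1}^p Z_{sa,kb} is independent of k. Define x_{ij}^{(a)} = Σ_{L=1}^n Z_{ia,jL}. Then for each a the p×p matrix x^{(a)} is a magic unitary, and moreover x_{ij}^{(a)} P_a^b = Z_{ia,jb} = P_a^b x_{ij}^{(a)} for all i,j ∈ [1,p] and a,b ∈ [1,n]; in particular x_{ij}^{(a)} commutes with P_a^b. -/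
/-- Projections summing to `1` in a C*-algebra are pairwise orthogonal. -/
lemma orth_of_sum_eq_one {ι A : Type*} [Fintype ι] [DecidableEq ι] [CStarAlgebra A]
    (u : ι → A) (hu : ∀ i, IsIdempotentElem (u i) ∧ star (u i) = u i)
    (hsum : ∑ i, u i = 1) {i j : ι} (hij : i ≠ j) : u i * u j = 0 := by
  letI := CStarAlgebra.spectralOrder A
  letI := CStarAlgebra.spectralOrderedRing A
  have hmain : ∑ k, u j * u k * u j = u j := by
    rw [← Finset.sum_mul, ← Finset.mul_sum, hsum, mul_one]
    exact (hu j).1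
  have hsplit : ∑ k ∈ Finset.univ.erase j, u j * u k * u j = 0 := by
    have h : (∑ k ∈ Finset.univ.erase j, u j * u k * u j) + u j * u j * u j
        = ∑ k, u j * u k * u j :=
      Finset.sum_erase_add _ _ (Finset.mem_univ j)
    rw [hmain, (hu j).1, (hu j).1] at h
    exact add_eq_right.mp h
  have hterm : ∀ k ∈ Finset.univ.erase j, u j * u k * u j = 0 := by
    have hnn : ∀ k ∈ Finset.univ.erase j, (0 : A) ≤ u j * u k * u j := by
      intro k _
      have : u j * u k * u j = star (u k * u j) * (u k * u j) := by
        rw [star_mul, (hu k).2, (hu j).2, ← mul_assoc, mul_assoc (u j) (u k) (u k), (hu k).1]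
      
      rw [this]
      exact star_mul_self_nonneg _
    exact (Finset.sum_eq_zero_iff_of_nonneg hnn).mp hsplit
  have hi : u j * u i * u j = 0 := hterm i (Finset.mem_erase.mpr ⟨hij, Finset.mem_univ i⟩)
  have : star (u i * u j) * (u i * u j) = 0 := by
    rw [star_mul, (hu i).2, (hu j).2, mul_assoc, ← mul_assoc (u i), (hu i).1, ← mul_assoc, hi]
  exact CStarRing.star_mul_self_eq_zero_iff _ |>.mp this

/-- Let `Z` be a magic unitary of size `np` indexed by `[1,p]×[1,n]`
such that `P_a^b := Σ_s Z_{sa,kb}` is independent of `k`. Define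
`x_{ij}^{(a)} = Σ_L Z_{ia,jL}`. Then each `p×p` matrix `x^{(a)}` is a magic unitary, and
`x_{ij}^{(a)} P_a^b = Z_{ia,jb} = P_a^b x_{ij}^{(a)}`; in particular `x_{ij}^{(a)}`
commutes with `P_a^b`. -/
theorem x_matrix_is_magic_unitary {p n : ℕ} {A : Type*} [CStarAlgebra A]
    (Z : Matrix (Fin p × Fin n) (Fin p × Fin n) A) (hZ : IsMagicUnitary Z)
    (hindep : ∀ (a b : Fin n) (k₁ k₂ : Fin p),
      ∑ s, Z (s, a) (k₁, b) = ∑ s, Z (s, a) (k₂, b))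
    (k₀ : Fin p) :
    (∀ a : Fin n,
      IsMagicUnitary (Matrix.of fun i j : Fin p => ∑ L, Z (i, a) (j, L))) ∧
    (∀ (i j : Fin p) (a b : Fin n),
      (∑ L, Z (i, a) (j, L)) * (∑ s, Z (s, a) (k₀, b)) = Z (i, a) (j, b) ∧
      (∑ s, Z (s, a) (k₀, b)) * (∑ L, Z (i, a) (j, L)) = Z (i, a) (j, b)) := by
  obtain ⟨hproj, hrow, hcol⟩ := hZ
  -- orthogonality in a row
  have hroworth : ∀ (r c c' : Fin p × Fin n), c ≠ c' → Z r c * Z r c' = 0 := fun r c c' h =>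
    orth_of_sum_eq_one (fun c => Z r c) (fun c => hproj r c) (hrow r) h
  -- orthogonality in a column
  have hcolorth : ∀ (c r r' : Fin p × Fin n), r ≠ r' → Z r c * Z r' c = 0 := fun c r r' h =>
    orth_of_sum_eq_one (fun r => Z r c) (fun r => hproj r c) (hcol c) h
  -- P a b (at any k)
  set P : Fin n → Fin n → A := fun a b => ∑ s, Z (s, a) (k₀, b) with hP
  have hPk : ∀ (a b : Fin n) (k : Fin p), P a b = ∑ s, Z (s, a) (k, b) := fun a b k =>
    hindep a b k₀ k
  -- Z (i,a) (j,b) * P a b = Z (i,a) (j,b)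
  have hZP : ∀ (i j : Fin p) (a b : Fin n), Z (i, a) (j, b) * P a b = Z (i, a) (j, b) := by
    intro i j a b
    rw [hPk a b j, Finset.mul_sum]
    rw [Finset.sum_eq_single i]
    · exact (hproj (i, a) (j, b)).1
    · intro s _ hs
      exact hcolorth _ _ _ (fun hEq => hs (congrArg Prod.fst hEq).symm)
    · simp
  have hPZ : ∀ (i j : Fin p) (a b : Fin n), P a b * Z (i, a) (j, b) = Z (i, a) (j, b) := by
    intro i j a b
    have hPsa : star (P a b) = P a b := by
      simp only [hP, star_sum]
      exact Finset.sum_congr rfl fun s _ => (hproj _ _).2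
    have := congrArg star (hZP i j a b)
    rwa [star_mul, hPsa, (hproj _ _).2] at this
  -- sum of P a b over b is 1
  have hPsum : ∀ a : Fin n, ∑ b, P a b = 1 := by
    intro a
    have hp : 0 < p := k₀.pos
    have key : ∑ k : Fin p, ∑ b, P a b = ∑ k : Fin p, (1 : A) := by
      calc ∑ k : Fin p, ∑ b, P a b
          = ∑ k : Fin p, ∑ b, ∑ s, Z (s, a) (k, b) := by
            exact Finset.sum_congr rfl fun k _ =>
              Finset.sum_congr rfl fun b _ => hPk a b k
        _ = ∑ k : Fin p, ∑ s : Fin p, ∑ b, Z (s, a) (k, b) :=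
            Finset.sum_congr rfl fun k _ => Finset.sum_comm
        _ = ∑ s : Fin p, ∑ k : Fin p, ∑ b, Z (s, a) (k, b) := Finset.sum_comm
        _ = ∑ s : Fin p, (1 : A) := by
            refine Finset.sum_congr rfl fun s _ => ?_
            have := hrow (s, a)
            rwa [Fintype.sum_prod_type] at this
        _ = ∑ k : Fin p, (1 : A) := rfl
    simp only [Finset.sum_const, Finset.card_univ, Fintype.card_fin] at key
    have hp' : (p : ℂ) ≠ 0 := by exact_mod_cast hp.ne'
    have key' : (p : ℂ) • (∑ b, P a b) = (p : ℂ) • (1 : A) := by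
      rw [Nat.cast_smul_eq_nsmul, Nat.cast_smul_eq_nsmul]; exact key
    calc ∑ b, P a b = (p : ℂ)⁻¹ • ((p : ℂ) • ∑ b, P a b) := by
          rw [smul_smul, inv_mul_cancel₀ hp', one_smul]
      _ = (p : ℂ)⁻¹ • ((p : ℂ) • (1 : A)) := by rw [key']
      _ = 1 := by rw [smul_smul, inv_mul_cancel₀ hp', one_smul]
  -- P a b is a projection
  have hPproj : ∀ a b, IsIdempotentElem (P a b) ∧ star (P a b) = P a b := by
    intro a b
    constructor
    · show P a b * P a b = P a b
      nth_rewrite 1 [hP]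
      rw [Finset.sum_mul]
      exact Finset.sum_congr rfl fun s _ => hZP s k₀ a b
    · simp only [hP, star_sum]
      exact Finset.sum_congr rfl fun s _ => (hproj _ _).2
  -- the P's are orthogonal
  have hPP : ∀ (a : Fin n) {b b' : Fin n}, b ≠ b' → P a b * P a b' = 0 := fun a b b' h =>
    orth_of_sum_eq_one (fun b => P a b) (fun b => hPproj a b) (hPsum a) h
  -- Z (i,a) (j,L) * P a b = 0 for L ≠ b
  have hZPzero : ∀ (i j : Fin p) (a b L : Fin n), L ≠ b → Z (i, a) (j, L) * P a b = 0 := by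
    intro i j a b L h
    calc Z (i, a) (j, L) * P a b = Z (i, a) (j, L) * P a L * P a b := by rw [hZP]
      _ = Z (i, a) (j, L) * (P a L * P a b) := by rw [mul_assoc]
      _ = 0 := by rw [hPP a h, mul_zero]
  have hPZzero : ∀ (i j : Fin p) (a b L : Fin n), L ≠ b → P a b * Z (i, a) (j, L) = 0 := by
    intro i j a b L h
    calc P a b * Z (i, a) (j, L) = P a b * (P a L * Z (i, a) (j, L)) := by rw [hPZ]
      _ = P a b * P a L * Z (i, a) (j, L) := by rw [mul_assoc]
      _ = 0 := by rw [hPP a (Ne.symm h), zero_mul]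
  constructor
  · intro a
    refine ⟨?_, ?_, ?_⟩
    · intro i j
      constructor
      · show (∑ L, Z (i, a) (j, L)) * (∑ L, Z (i, a) (j, L)) = ∑ L, Z (i, a) (j, L)
        rw [Finset.sum_mul_sum]
        refine Finset.sum_congr rfl fun L _ => ?_
        rw [Finset.sum_eq_single L]
        · exact (hproj _ _).1
        · intro L' _ hL'
          exact hroworth _ _ _ (fun hEq => hL' (congrArg Prod.snd hEq).symm)
        · simp
      · show star (∑ L, Z (i, a) (j, L)) = ∑ L, Z (i, a) (j, L)
        rw [star_sum]
        exact Finset.sum_congr rfl fun L _ => (hproj _ _).2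
    · intro i
      show ∑ j, ∑ L, Z (i, a) (j, L) = 1
      have := hrow (i, a)
      rwa [Fintype.sum_prod_type] at this
    · intro j
      show ∑ i, ∑ L, Z (i, a) (j, L) = 1
      calc ∑ i, ∑ L, Z (i, a) (j, L) = ∑ L, ∑ i, Z (i, a) (j, L) := Finset.sum_comm
        _ = ∑ L, P a L := Finset.sum_congr rfl fun L _ => (hPk a L j).symm
        _ = 1 := hPsum a
  · intro i j a b
    constructor
    · show (∑ L, Z (i, a) (j, L)) * P a b = Z (i, a) (j, b)
      rw [Finset.sum_mul, Finset.sum_eq_single b]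
      · exact hZP i j a b
      · intro L _ hL
        exact hZPzero i j a b L hL
      · simp
    · show P a b * (∑ L, Z (i, a) (j, L)) = Z (i, a) (j, b)
      rw [Finset.mul_sum, Finset.sum_eq_single b]
      · exact hPZ i j a b
      · intro L _ hL
        exact hPZzero i j a b L hL
      · simp
end

section
/- Let X be a finite simple graph such that both X and its complement X^c are connected. Let k_1 be a vertex and suppose N(k_1) = S_1 ∪ S_2 is a partition of the neighborhood of k_1 such that every s ∈ S_2 satisfies W(k_1) ⊆ N(s), and such that whenever s_1 ∈ S_1, s_2 ∈ S_2 and s_2 ∈ W(s_1), one has N(s_2) ⊆ W(s_1). Then S_2 = ∅. -/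
/-- Let `X` be a finite simple graph such that both `X` and `Xᶜ` are
connected. Let `k₁` be a vertex and `N(k₁) = S₁ ∪ S₂` a partition of its neighborhood
such that every `s ∈ S₂` satisfies `W(k₁) ⊆ N(s)` (where `W(v)` is the set of vertices
`≠ v` not adjacent to `v`), and whenever `s₁ ∈ S₁`, `s₂ ∈ S₂` and `s₂ ∈ W(s₁)`, one has
`N(s₂) ⊆ W(s₁)`. Then `S₂ = ∅`. -/
theorem S2_empty {α : Type*} [Fintype α] (X : SimpleGraph α)
    (hX : X.Connected) (hXc : Xᶜ.Connected)
    (k₁ : α) (S₁ S₂ : Set α) (hdisj : Disjoint S₁ S₂)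
    (hunion : S₁ ∪ S₂ = X.neighborSet k₁)
    (hS₂ : ∀ s ∈ S₂, {u : α | u ≠ k₁ ∧ ¬ X.Adj k₁ u} ⊆ X.neighborSet s)
    (hS₁S₂ : ∀ s₁ ∈ S₁, ∀ s₂ ∈ S₂, (s₂ ≠ s₁ ∧ ¬ X.Adj s₁ s₂) →
      X.neighborSet s₂ ⊆ {u : α | u ≠ s₁ ∧ ¬ X.Adj s₁ u}) :
    S₂ = ∅ := by
  by_contra hne
  obtain ⟨s₂, hs₂⟩ := Set.nonempty_iff_ne_empty.mpr hne
  have hk₁ : k₁ ∉ S₂ := by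
    intro h
    have : s₂ ∈ S₁ ∪ S₂ := Or.inr hs₂
    rw [hunion] at this
    have : k₁ ∈ S₁ ∪ S₂ := Or.inr h
    rw [hunion] at this
    exact X.irrefl this
  -- closure: X^c neighbors of elements of S₂ are in S₂
  have closure : ∀ u ∈ S₂, ∀ v, Xᶜ.Adj u v → v ∈ S₂ := by
    intro u hu v huv
    obtain ⟨hne', hnadj⟩ := huv
    have huN : u ∈ X.neighborSet k₁ := by rw [← hunion]; exact Or.inr hu
    have hvk : v ≠ k₁ := by
      rintro rfl
      exact hnadj (X.adj_symm huN)
    by_cases hvN : X.Adj k₁ v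
    · -- v ∈ N(k₁) = S₁ ∪ S₂
      have : v ∈ S₁ ∪ S₂ := by rw [hunion]; exact hvN
      rcases this with hv1 | hv2
      · exfalso
        have h2 := hS₁S₂ v hv1 u hu ⟨fun h => hne' h, fun h => hnadj (X.adj_symm h)⟩
        have hk₁N : k₁ ∈ X.neighborSet u := X.adj_symm huN
        have := h2 hk₁N
        exact this.2 (X.adj_symm hvN)
      · exact hv2
    · exfalso
      exact hnadj (hS₂ u hu ⟨hvk, hvN⟩)
  -- walk in Xᶜ from s₂ to k₁
  have hreach : Xᶜ.Reachable s₂ k₁ := hXc.preconnected s₂ k₁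
  obtain ⟨w⟩ := hreach
  have key : ∀ {a b : α} (w : Xᶜ.Walk a b), a ∈ S₂ → b ∈ S₂ := by
    intro a b w
    induction w with
    | nil => exact id
    | cons h p ih => intro ha; exact ih (closure _ ha _ h)
  exact hk₁ (key w hs₂)
end
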